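/- arXiv:0810.4062 — 2 statements merged into one kernel-verified Lean document; each statement's English description precedes it below -/
import Mathlib

section
/- If H1 and H2 are finite k-uniform hypergraphs with t(F,H1) = t(F,H2) for every finite k-uniform hypergraph F, then there exists a k-uniform hypergraph H which is simultaneously an equitable blowup of H1 and an equitable blowup of H2 (namely, the |V(H2)|-fold blowup of H1 is isomorphic to the |V(H1)|-fold blowup of H2). -/
open Finset

/-- A `k`-uniform hypergraph on a finite vertex set `V`: an `S_k`-invariant set of
`k`-tuples of vertices with no repeated coordinates. -/
structure HyperGraph (k : ℕ) (V : Type) [DecidableEq V] [Fintype V] where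
  edges : Finset (Fin k → V)
  perm_mem : ∀ σ : Equiv.Perm (Fin k), ∀ e ∈ edges, e ∘ σ ∈ edges
  edge_inj : ∀ e ∈ edges, Function.Injective e

variable {k : ℕ} {V W : Type} [DecidableEq V] [Fintype V] [DecidableEq W] [Fintype W]

/-- `f : V(F) → V(H)` is a homomorphism if it maps edges to edges. -/
def IsHom (F : HyperGraph k V) (H : HyperGraph k W) (f : V → W) : Prop :=
  ∀ e ∈ F.edges, f ∘ e ∈ H.edges

/-- `hom(F,H)`: the number of homomorphisms from `F` to `H`. -/
noncomputable def homCount (F : HyperGraph k V) (H : HyperGraph k W) : ℕ :=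
  letI := Classical.decPred (IsHom F H)
  (Finset.univ.filter (IsHom F H)).card

/-- `hom⁰(F,H)`: the number of injective homomorphisms from `F` to `H`. -/
noncomputable def injHomCount (F : HyperGraph k V) (H : HyperGraph k W) : ℕ :=
  letI : DecidablePred (fun f : V → W => IsHom F H f ∧ Function.Injective f) :=
    Classical.decPred _
  (Finset.univ.filter (fun f : V → W => IsHom F H f ∧ Function.Injective f)).card


/-- The homomorphism density `t(F,H) = hom(F,H) / |V(H)|^{|V(F)|}`. -/
noncomputable def homDensity (F : HyperGraph k V) (H : HyperGraph k W) : ℝ :=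
  (homCount F H : ℝ) / (Fintype.card W : ℝ) ^ (Fintype.card V)

/-- The `t`-fold equitable blowup of `H`: each vertex is replaced by `t` copies and each
edge by the complete `k`-partite hypergraph on the corresponding classes of copies. -/
def blowup (H : HyperGraph k V) (t : ℕ) : HyperGraph k (V × Fin t) where
  edges := Finset.univ.filter (fun g : Fin k → V × Fin t => (Prod.fst ∘ g) ∈ H.edges)
  perm_mem := by
    intro σ g hg
    simp only [Finset.mem_filter, Finset.mem_univ, true_and] at hg ⊢
    exact H.perm_mem σ _ hg
  edge_inj := by
    intro g hg
    simp only [Finset.mem_filter, Finset.mem_univ, true_and] at hg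
    intro a b hab
    exact H.edge_inj _ hg (congrArg Prod.fst hab)

/-!
A `t`-fold blowup multiplies `hom(F, ·)` by `t ^ |V(F)|`, so equal densities make the blowups
`H₁[|W|]` and `H₂[|V|]`, which have the same number of vertices, have equal homomorphism counts
from every `F`. Sorting homomorphisms by their kernel gives `hom(F, H) = ∑ₛ hom⁰(F/s, H)` over the
equivalence relations `s` on `V(F)` that separate the vertices of each edge; the term `s = ⊥` is
`hom⁰(F, H)` and the others have fewer vertices, so by induction on `|V(F)|` the injective counts
agree as well. Since `hom⁰(B, B) > 0`, each blowup embeds into the other; the embedding of the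
first is a bijection, and the reverse embedding shows that it cannot miss an edge.
-/

variable {A B W₁ W₂ : Type} [DecidableEq A] [Fintype A] [DecidableEq B] [Fintype B]
  [DecidableEq W₁] [Fintype W₁] [DecidableEq W₂] [Fintype W₂]

namespace HyperGraph

def map (F : HyperGraph k A) (p : A → B) (hp : ∀ e ∈ F.edges, Function.Injective (p ∘ e)) :
    HyperGraph k B where
  edges := F.edges.image (p ∘ ·)
  perm_mem σ _ hpe := by
    obtain ⟨e, he, rfl⟩ := Finset.mem_image.1 hpe
    exact Finset.mem_image.2 ⟨e ∘ σ, F.perm_mem σ e he, rfl⟩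
  edge_inj _ hpe := by
    obtain ⟨e, he, rfl⟩ := Finset.mem_image.1 hpe
    exact hp e he

end HyperGraph

lemma isHom_map_iff {F : HyperGraph k A} {p : A → B} {hp} {H : HyperGraph k W} {g : B → W} :
    IsHom (F.map p hp) H g ↔ IsHom F H (g ∘ p) := by
  simp [IsHom, HyperGraph.map, Function.comp_assoc]

lemma isHom_blowup_iff {F : HyperGraph k A} {H : HyperGraph k V} {t : ℕ}
    {f : A → V × Fin t} : IsHom F (blowup H t) f ↔ IsHom F H (Prod.fst ∘ f) := by
  simp [IsHom, blowup, Function.comp_assoc]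

lemma homCount_eq_card (F : HyperGraph k A) (H : HyperGraph k W) :
    homCount F H = Nat.card {f : A → W // IsHom F H f} := by
  classical
  rw [homCount, Nat.card_eq_fintype_card, Fintype.card_subtype]

lemma injHomCount_eq_card (F : HyperGraph k A) (H : HyperGraph k W) :
    injHomCount F H = Nat.card {f : A → W // IsHom F H f ∧ Function.Injective f} := by
  classical
  rw [injHomCount, Nat.card_eq_fintype_card, Fintype.card_subtype]
  congr!

lemma injHomCount_pos_iff {F : HyperGraph k A} {H : HyperGraph k W} :
    0 < injHomCount F H ↔ ∃ f : A → W, IsHom F H f ∧ Function.Injective f := by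
  rw [injHomCount_eq_card, Finite.card_pos_iff, nonempty_subtype]

lemma injHomCount_self_pos (G : HyperGraph k A) : 0 < injHomCount G G :=
  injHomCount_pos_iff.2 ⟨id, fun _ he => he, Function.injective_id⟩

lemma homCount_map_of_bijective (F : HyperGraph k A) {p : A → B} (hp)
    (hbij : Function.Bijective p) (H : HyperGraph k W) :
    homCount (F.map p hp) H = homCount F H := by
  let e := Equiv.ofBijective p hbij
  rw [homCount_eq_card, homCount_eq_card]
  exact Nat.card_congr <| (e.arrowCongr (Equiv.refl W)).symm.subtypeEquiv fun _ => isHom_map_iff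

lemma homCount_blowup (F : HyperGraph k A) (H : HyperGraph k V) (t : ℕ) :
    homCount F (blowup H t) = homCount F H * t ^ Fintype.card A := by
  rw [homCount_eq_card, homCount_eq_card, Nat.card_congr <|
    ((Equiv.arrowProdEquivProdArrow A (fun _ => V) (fun _ => Fin t)).subtypeEquiv
      fun _ => isHom_blowup_iff).trans Equiv.prodSubtypeFstEquivSubtypeProd]
  simp [Nat.card_prod]

lemma homCount_blowup_eq_of_homDensity_eq [Nonempty V] [Nonempty W] {H₁ : HyperGraph k V}
    {H₂ : HyperGraph k W} {F : HyperGraph k A} (h : homDensity F H₁ = homDensity F H₂) :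
    homCount F (blowup H₁ (Fintype.card W)) = homCount F (blowup H₂ (Fintype.card V)) := by
  rw [homDensity, homDensity, div_eq_div_iff (by positivity) (by positivity)] at h
  rw [homCount_blowup, homCount_blowup]
  exact_mod_cast h

lemma homCount_eq_of_forall_fin {G₁ : HyperGraph k W₁} {G₂ : HyperGraph k W₂}
    (h : ∀ (n : ℕ) (F : HyperGraph k (Fin n)), homCount F G₁ = homCount F G₂)
    (F : HyperGraph k A) : homCount F G₁ = homCount F G₂ := by
  let e := Fintype.equivFin A
  have he : ∀ x ∈ F.edges, Function.Injective (e ∘ x) :=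
    fun x hx => e.injective.comp (F.edge_inj x hx)
  rw [← homCount_map_of_bijective F he e.bijective, ← homCount_map_of_bijective F he e.bijective]
  exact h _ _

namespace Setoid

variable {α β γ : Type*}

lemma ker_comp_of_injective {f : α → β} {g : β → γ} (hg : Function.Injective g) :
    ker (g ∘ f) = ker f :=
  Setoid.ext fun _ _ => hg.eq_iff

lemma exists_injective_comp_eq_of_ker_eq {p : α → β} (hp : Function.Surjective p) {f : α → γ}
    (h : ker f = ker p) : ∃ g : β → γ, Function.Injective g ∧ g ∘ p = f := by
  refine ⟨f ∘ Function.surjInv hp, fun b b' hbb' => ?_, funext fun a => ?_⟩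
  · have hrel : ker p (Function.surjInv hp b) (Function.surjInv hp b') := h ▸ hbb'
    simpa [ker_def, Function.surjInv_eq hp] using hrel
  · have hrel : ker p (Function.surjInv hp (p a)) a := Function.surjInv_eq hp (p a)
    exact (h ▸ hrel : ker f _ a)

lemma card_quotient_lt [Fintype α] {s : Setoid α} [Fintype (Quotient s)] (hs : s ≠ ⊥) :
    Fintype.card (Quotient s) < Fintype.card α :=
  Fintype.card_lt_of_surjective_not_injective _ Quotient.mk''_surjective fun hinj =>
    hs (ker_mk_eq s ▸ ker_eq_bot_iff.2 hinj)

instance instFinite [Finite α] : Finite (Setoid α) :=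
  Finite.of_injective _ fun _ _ h => eq_iff_rel_eq.2 h

noncomputable instance instFintype [Finite α] : Fintype (Setoid α) :=
  Fintype.ofFinite _

end Setoid

noncomputable def kerHomCount (F : HyperGraph k A) (H : HyperGraph k W) (s : Setoid A) : ℕ :=
  Nat.card {f : A → W // IsHom F H f ∧ Setoid.ker f = s}

lemma homCount_eq_sum_kerHomCount (F : HyperGraph k A) (H : HyperGraph k W) :
    homCount F H = ∑ s : Setoid A, kerHomCount F H s := by
  rw [homCount_eq_card, ← Nat.card_congr (Equiv.sigmaFiberEquiv fun f : {f // IsHom F H f} =>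
    Setoid.ker f.1), Nat.card_sigma]
  exact Finset.sum_congr rfl fun s _ =>
    Nat.card_congr (Equiv.subtypeSubtypeEquivSubtypeInter (IsHom F H) (Setoid.ker · = s))

lemma kerHomCount_bot (F : HyperGraph k A) (H : HyperGraph k W) :
    kerHomCount F H ⊥ = injHomCount F H := by
  simp only [kerHomCount, injHomCount_eq_card, Setoid.ker_eq_bot_iff]

lemma kerHomCount_ker_eq_injHomCount_map (F : HyperGraph k A) (H : HyperGraph k W)
    {p : A → B} (hsurj : Function.Surjective p) (hp) :
    kerHomCount F H (Setoid.ker p) = injHomCount (F.map p hp) H := by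
  rw [kerHomCount, injHomCount_eq_card]
  symm
  refine Nat.card_eq_of_bijective
    (fun g => ⟨g.1 ∘ p, isHom_map_iff.1 g.2.1, Setoid.ker_comp_of_injective g.2.2⟩)
    ⟨fun g g' hgg' => Subtype.ext (hsurj.injective_comp_right (congrArg Subtype.val hgg')), ?_⟩
  rintro ⟨f, hf, hker⟩
  obtain ⟨g, hg, rfl⟩ := Setoid.exists_injective_comp_eq_of_ker_eq hsurj hker
  exact ⟨⟨g, isHom_map_iff.2 hf, hg⟩, rfl⟩

lemma kerHomCount_ker_eq_zero (F : HyperGraph k A) (H : HyperGraph k W) {β : Type*} {p : A → β}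
    (hp : ∃ e ∈ F.edges, ¬ Function.Injective (p ∘ e)) : kerHomCount F H (Setoid.ker p) = 0 := by
  obtain ⟨e, he, hpe⟩ := hp
  rw [kerHomCount, Nat.card_eq_zero]
  exact .inl ⟨fun ⟨f, hf, hker⟩ => hpe fun a b hab =>
    H.edge_inj _ (hf e he) (show Setoid.ker f (e a) (e b) from hker ▸ hab)⟩

lemma injHomCount_eq_of_homCount_eq {G₁ : HyperGraph k W₁} {G₂ : HyperGraph k W₂}
    (h : ∀ (A : Type) [DecidableEq A] [Fintype A] (F : HyperGraph k A),
      homCount F G₁ = homCount F G₂)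
    (F : HyperGraph k A) : injHomCount F G₁ = injHomCount F G₂ := by
  classical
  induction hn : Fintype.card A using Nat.strong_induction_on generalizing A with
  | _ n ih =>
  have hker : ∀ s ∈ Finset.univ.erase (⊥ : Setoid A),
      kerHomCount F G₁ s = kerHomCount F G₂ s := by
    intro s hs
    rw [← Setoid.ker_mk_eq s]
    by_cases hsep : ∀ e ∈ F.edges, Function.Injective (Quotient.mk s ∘ e)
    · rw [kerHomCount_ker_eq_injHomCount_map F G₁ Quotient.mk''_surjective hsep,
        kerHomCount_ker_eq_injHomCount_map F G₂ Quotient.mk''_surjective hsep]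
      exact ih _ (hn ▸ Setoid.card_quotient_lt (Finset.ne_of_mem_erase hs)) _ rfl
    · push Not at hsep
      rw [kerHomCount_ker_eq_zero F G₁ hsep, kerHomCount_ker_eq_zero F G₂ hsep]
  have hsum := h A F
  rw [homCount_eq_sum_kerHomCount, homCount_eq_sum_kerHomCount,
    ← Finset.add_sum_erase _ _ (Finset.mem_univ ⊥),
    ← Finset.add_sum_erase _ _ (Finset.mem_univ ⊥),
    Finset.sum_congr rfl hker, kerHomCount_bot, kerHomCount_bot] at hsum
  exact Nat.add_right_cancel hsum

lemma card_edges_le_of_isHom {G : HyperGraph k A} {H : HyperGraph k B} {φ : A → B}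
    (hφ : IsHom G H φ) (hinj : Function.Injective φ) : #G.edges ≤ #H.edges :=
  Finset.card_le_card_of_injOn (φ ∘ ·) (fun e he => hφ e he)
    fun _ _ _ _ h => funext fun i => hinj (congrFun h i)

lemma mem_edges_iff_of_isHom {G : HyperGraph k A} {H : HyperGraph k B} {φ : A → B}
    (hφ : IsHom G H φ) (hinj : Function.Injective φ) (hcard : #H.edges ≤ #G.edges)
    (e : Fin k → A) : e ∈ G.edges ↔ φ ∘ e ∈ H.edges := by
  have hcomp : Function.Injective (φ ∘ · : (Fin k → A) → Fin k → B) :=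
    fun _ _ h => funext fun i => hinj (congrFun h i)
  have himage : G.edges.image (φ ∘ ·) = H.edges :=
    Finset.eq_of_subset_of_card_le (fun _ h => by
      obtain ⟨e', he', rfl⟩ := Finset.mem_image.1 h
      exact hφ e' he') (by rwa [Finset.card_image_of_injective _ hcomp])
  rw [← himage, hcomp.mem_finset_image]

/-- If two `k`-uniform hypergraphs have equal homomorphism densities `t(F,·)` for every
finite `k`-uniform hypergraph `F`, then some hypergraph is an equitable blowup of both:
concretely, the `|V(H₂)|`-fold blowup of `H₁` is isomorphic to the `|V(H₁)|`-fold blowup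
of `H₂`. -/
theorem blowups_iso_of_homDensity_eq [Nonempty V] [Nonempty W]
    (H₁ : HyperGraph k V) (H₂ : HyperGraph k W)
    (h : ∀ (n : ℕ) (F : HyperGraph k (Fin n)), homDensity F H₁ = homDensity F H₂) :
    ∃ e : V × Fin (Fintype.card W) ≃ W × Fin (Fintype.card V),
      ∀ f : Fin k → V × Fin (Fintype.card W),
        f ∈ (blowup H₁ (Fintype.card W)).edges ↔
          (⇑e ∘ f) ∈ (blowup H₂ (Fintype.card V)).edges := by
  classical
  have hhom : ∀ (A : Type) [DecidableEq A] [Fintype A] (F : HyperGraph k A),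
      homCount F (blowup H₁ (Fintype.card W)) = homCount F (blowup H₂ (Fintype.card V)) :=
    fun _ _ _ => homCount_eq_of_forall_fin fun n F => homCount_blowup_eq_of_homDensity_eq (h n F)
  obtain ⟨φ, hφ, hφinj⟩ := injHomCount_pos_iff.1 <|
    injHomCount_eq_of_homCount_eq hhom (blowup H₁ _) ▸ injHomCount_self_pos _
  obtain ⟨ψ, hψ, hψinj⟩ := injHomCount_pos_iff.1 <|
    (injHomCount_eq_of_homCount_eq hhom (blowup H₂ _)).symm ▸ injHomCount_self_pos _
  have hbij : Function.Bijective φ :=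
    (Fintype.bijective_iff_injective_and_card φ).2 ⟨hφinj, by simp [mul_comm]⟩
  exact ⟨Equiv.ofBijective φ hbij,
    mem_edges_iff_of_isHom hφ hφinj (card_edges_le_of_isHom hψ hψinj)⟩
end

section
/- Let f_i : X_i → [-d,d] be uniformly bounded functions on finite sets and let f : X → [-d,d] be their ultraproduct function, f([(p_i)]) = lim_ω f_i(p_i). Then f is measurable with respect to the Loeb σ-algebra on X, and ∫_X f dμ = lim_ω ( Σ_{p ∈ X_i} f_i(p) / |X_i| ). -/
open Filter Set MeasureTheory

/-- The equivalence relation of `ω`-almost-everywhere equality on `∏ᵢ Xᵢ`. -/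
def upSetoid (X : ℕ → Type) (ω : Ultrafilter ℕ) : Setoid (∀ i, X i) where
  r p q := {i | p i = q i} ∈ ω
  iseqv := by
    refine ⟨fun p => ?_, fun {p q} h => ?_, fun {p q r} h₁ h₂ => ?_⟩
    · simp only [eq_self_iff_true, Set.setOf_true]
      exact Filter.univ_mem
    · exact Filter.mem_of_superset h (fun i hi => hi.symm)
    · exact Filter.mem_of_superset (Filter.inter_mem h₁ h₂)
        (fun i hi => hi.1.trans hi.2)

/-- The ultraproduct `X = (∏ᵢ Xᵢ)/∼` of the sets `Xᵢ` along the ultrafilter `ω`. -/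
def UProd (X : ℕ → Type) (ω : Ultrafilter ℕ) : Type := Quotient (upSetoid X ω)

/-- The internal (ultraproduct) subset `[{Aᵢ}] ⊆ X` determined by sets `Aᵢ ⊆ Xᵢ`. -/
def internalSet (X : ℕ → Type) (ω : Ultrafilter ℕ) (A : ∀ i, Finset (X i)) :
    Set (UProd X ω) :=
  {x | Quotient.liftOn x (fun p => {i | p i ∈ A i} ∈ ω) (by
    intro p q h
    refine propext ⟨fun hp => ?_, fun hq => ?_⟩
    · exact Filter.mem_of_superset (Filter.inter_mem h hp)
        (fun i hi => by rw [Set.mem_setOf_eq, ← hi.1]; exact hi.2)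
    · exact Filter.mem_of_superset (Filter.inter_mem h hq)
        (fun i hi => by rw [Set.mem_setOf_eq, hi.1]; exact hi.2))}

/-- The ultralimit of a real sequence along the ultrafilter `ω`. -/
noncomputable def ulim (ω : Ultrafilter ℕ) (a : ℕ → ℝ) : ℝ :=
  limUnder (ω : Filter ℕ) a

/-- The finitely additive measure of an internal set: `μ([{Aᵢ}]) = lim_ω |Aᵢ|/|Xᵢ|`. -/
noncomputable def intMeasure (X : ℕ → Type) [∀ i, Fintype (X i)] (ω : Ultrafilter ℕ)
    (A : ∀ i, Finset (X i)) : ℝ :=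
  ulim ω (fun i => ((A i).card : ℝ) / (Fintype.card (X i) : ℝ))

/-- A set `N ⊆ X` in the ultraproduct is a *nullset* if for every `ε > 0` it is covered by
an internal set of measure at most `ε`. -/
def IsNull (X : ℕ → Type) [∀ i, Fintype (X i)] (ω : Ultrafilter ℕ)
    (N : Set (UProd X ω)) : Prop :=
  ∀ ε : ℝ, 0 < ε → ∃ A : ∀ i, Finset (X i),
    N ⊆ internalSet X ω A ∧ intMeasure X ω A ≤ ε

/-- The Loeb σ-algebra on the ultraproduct: the σ-algebra generated by the sets that agree
with an internal set up to a nullset (by the Loeb construction, this collection is itself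
a σ-algebra). -/
def loebSpace (X : ℕ → Type) [∀ i, Fintype (X i)] (ω : Ultrafilter ℕ) :
    MeasurableSpace (UProd X ω) :=
  MeasurableSpace.generateFrom
    {B | ∃ A : ∀ i, Finset (X i), IsNull X ω (symmDiff B (internalSet X ω A))}

/-- A measure on the Loeb σ-algebra is a *Loeb measure* if it is a probability measure
assigning to every internal set `[{Aᵢ}]` the value `lim_ω |Aᵢ|/|Xᵢ|`. -/
def IsLoebMeasure (X : ℕ → Type) [∀ i, Fintype (X i)] (ω : Ultrafilter ℕ)
    (ν : @MeasureTheory.Measure (UProd X ω) (loebSpace X ω)) : Prop :=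
  @MeasureTheory.IsProbabilityMeasure (UProd X ω) (loebSpace X ω) ν ∧
  ∀ A : ∀ i, Finset (X i), ν (internalSet X ω A) = ENNReal.ofReal (intMeasure X ω A)

/-- The ultraproduct of a uniformly bounded family of functions `fᵢ : Xᵢ → ℝ`:
`f([(pᵢ)]) = lim_ω fᵢ(pᵢ)`. -/
noncomputable def uprodFun (X : ℕ → Type) (ω : Ultrafilter ℕ)
    (f : ∀ i, X i → ℝ) : UProd X ω → ℝ :=
  Quotient.lift (fun p => ulim ω (fun i => f i (p i))) (by
    intro p q h
    have he : (fun i => f i (p i)) =ᶠ[(ω : Filter ℕ)] (fun i => f i (q i)) :=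
      Filter.mem_of_superset h (fun i hi => congrArg (f i) hi)
    show lim (Filter.map (fun i => f i (p i)) (ω : Filter ℕ)) =
      lim (Filter.map (fun i => f i (q i)) (ω : Filter ℕ))
    rw [Filter.map_congr he])

/-!
For a family with values in a fixed finite set `V ⊆ ℝ`, the ultraproduct function is
`∑ v ∈ V, v · 1_{[{fᵢ = v}]}`, a simple function over internal sets, so it is Loeb measurable
and the identity is the defining property `μ([{Aᵢ}]) = lim_ω |Aᵢ|/|Xᵢ|` of the Loeb measure.
A family with values in `[-d, d]` is within `ε` of its discretization `⌊fᵢ/ε⌋ ε`, which takes only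
finitely many values, and both the ultraproduct function and the ultralimit of the averages move
by at most `ε` when the family moves by at most `ε` uniformly. So `f` is a uniform limit of
Loeb measurable functions, and the two sides of the identity differ by at most `2ε` for every `ε`.
-/

open Filter Set MeasureTheory Topology

lemma Int.abs_sub_floor_div_mul_le {x ε : ℝ} (hε : 0 < ε) : |x - ⌊x / ε⌋ * ε| ≤ ε :=
  abs_le.2 ⟨by linarith [Int.sub_floor_div_mul_nonneg x hε],
    (Int.sub_floor_div_mul_lt x hε).le⟩

lemma Int.floor_div_mul_mem_image {x d ε : ℝ} (hε : 0 < ε) (hx : x ∈ Icc (-d) d) :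
    ⌊x / ε⌋ * ε ∈ (Finset.Icc ⌊-d / ε⌋ ⌊d / ε⌋).image (fun k : ℤ => k * ε) :=
  Finset.mem_image_of_mem _ <| Finset.mem_Icc.2
    ⟨Int.floor_mono (div_le_div_of_nonneg_right hx.1 hε.le),
      Int.floor_mono (div_le_div_of_nonneg_right hx.2 hε.le)⟩

section Average

variable {α : Type*} [Fintype α] [Nonempty α] {u v : α → ℝ}

lemma sum_div_card_mem_Icc {m M : ℝ} (h : ∀ p, u p ∈ Icc m M) :
    (∑ p, u p) / Fintype.card α ∈ Icc m M := by
  rw [← Fintype.expect_eq_sum_div_card]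
  exact ⟨Finset.le_expect Finset.univ_nonempty fun p _ => (h p).1,
    Finset.expect_le Finset.univ_nonempty fun p _ => (h p).2⟩

lemma abs_sum_div_card_sub_le {ε : ℝ} (h : ∀ p, |u p - v p| ≤ ε) :
    |(∑ p, u p) / Fintype.card α - (∑ p, v p) / Fintype.card α| ≤ ε := by
  rw [← Fintype.expect_eq_sum_div_card, ← Fintype.expect_eq_sum_div_card,
    ← Finset.expect_sub_distrib]
  exact (Finset.abs_expect_le _ _).trans (Finset.expect_le Finset.univ_nonempty fun p _ => h p)

end Average

lemma measurable_of_forall_exists_abs_sub_le {α : Type*} [MeasurableSpace α] {F : α → ℝ}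
    (h : ∀ ε > 0, ∃ G : α → ℝ, Measurable G ∧ ∀ x, |F x - G x| ≤ ε) : Measurable F := by
  choose G hGm hG using fun n : ℕ => h (1 / (n + 1)) Nat.one_div_pos_of_nat
  refine measurable_of_tendsto_metrizable hGm (tendsto_pi_nhds.2 fun x => ?_)
  refine tendsto_iff_dist_tendsto_zero.2 (squeeze_zero (fun _ => dist_nonneg) (fun n => ?_)
    tendsto_one_div_add_atTop_nhds_zero_nat)
  rw [Real.dist_eq, abs_sub_comm]
  exact hG n x

lemma abs_integral_sub_integral_le {α : Type*} [MeasurableSpace α] {μ : Measure α}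
    [IsProbabilityMeasure μ] {F G : α → ℝ} {ε : ℝ} (hF : Integrable F μ) (hG : Integrable G μ)
    (h : ∀ x, |F x - G x| ≤ ε) : |∫ x, F x ∂μ - ∫ x, G x ∂μ| ≤ ε := by
  rw [← integral_sub hF hG]
  simpa using norm_integral_le_of_norm_le_const (μ := μ)
    (Eventually.of_forall fun x => (Real.norm_eq_abs (F x - G x)).trans_le (h x))

section Ultralimit

variable {ω : Ultrafilter ℕ} {a b : ℕ → ℝ}

lemma tendsto_ulim_of_mem_Icc {m M : ℝ} (h : ∀ i, a i ∈ Icc m M) :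
    Tendsto a ω (𝓝 (ulim ω a)) := by
  have hmem : a ⁻¹' Icc m M ∈ ω := univ_mem' h
  obtain ⟨x, -, hx⟩ := isCompact_Icc.ultrafilter_le_nhds (ω.map a) (le_principal_iff.2 hmem)
  exact tendsto_nhds_limUnder ⟨x, hx⟩

lemma ulim_eq_of_tendsto {L : ℝ} (h : Tendsto a ω (𝓝 L)) : ulim ω a = L :=
  h.limUnder_eq

lemma abs_ulim_sub_ulim_le {m M ε : ℝ} (ha : ∀ i, a i ∈ Icc m M) (hab : ∀ i, |a i - b i| ≤ ε) :
    |ulim ω a - ulim ω b| ≤ ε := by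
  have hb : ∀ i, b i ∈ Icc (m - ε) (M + ε) := fun i => by
    obtain ⟨h₁, h₂⟩ := abs_le.1 (hab i)
    exact ⟨by linarith [(ha i).1], by linarith [(ha i).2]⟩
  exact le_of_tendsto' ((tendsto_ulim_of_mem_Icc ha).sub (tendsto_ulim_of_mem_Icc hb)).abs hab

end Ultralimit

section Ultraproduct

variable {X : ℕ → Type} {ω : Ultrafilter ℕ} {f g : ∀ i, X i → ℝ} {m M : ℝ}

lemma tendsto_uprodFun_mk (hf : ∀ i p, f i p ∈ Icc m M) (p : ∀ i, X i) :
    Tendsto (fun i => f i (p i)) ω (𝓝 (uprodFun X ω f (Quotient.mk _ p))) :=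
  tendsto_ulim_of_mem_Icc fun i => hf i (p i)

lemma uprodFun_mem_Icc (hf : ∀ i p, f i p ∈ Icc m M) (x : UProd X ω) :
    uprodFun X ω f x ∈ Icc m M :=
  Quotient.inductionOn x fun p =>
    isClosed_Icc.mem_of_tendsto (tendsto_uprodFun_mk hf p)
      (Eventually.of_forall fun i => hf i (p i))

lemma abs_uprodFun_sub_le {ε : ℝ} (hf : ∀ i p, f i p ∈ Icc m M)
    (hfg : ∀ i p, |f i p - g i p| ≤ ε) (x : UProd X ω) :
    |uprodFun X ω f x - uprodFun X ω g x| ≤ ε :=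
  Quotient.inductionOn x fun p => abs_ulim_sub_ulim_le (fun i => hf i (p i)) fun i => hfg i (p i)

lemma tendsto_indicator_internalSet (A : ∀ i, Finset (X i)) (p : ∀ i, X i) :
    Tendsto (fun i => (A i : Set (X i)).indicator (1 : X i → ℝ) (p i)) ω
      (𝓝 ((internalSet X ω A).indicator 1 (Quotient.mk _ p))) := by
  by_cases h : {i | p i ∈ A i} ∈ ω
  · rw [show (internalSet X ω A).indicator 1 (Quotient.mk _ p) = (1 : ℝ) from
      indicator_of_mem (show Quotient.mk _ p ∈ internalSet X ω A from h) _]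
    exact tendsto_const_nhds.congr' (eventually_of_mem h fun i hi =>
      (indicator_of_mem (Finset.mem_coe.2 hi) _).symm)
  · rw [show (internalSet X ω A).indicator 1 (Quotient.mk _ p) = (0 : ℝ) from
      indicator_of_notMem (show Quotient.mk _ p ∉ internalSet X ω A from h) _]
    exact tendsto_const_nhds.congr' (eventually_of_mem (Ultrafilter.compl_mem_iff_notMem.2 h)
      fun i hi => (indicator_of_notMem (mt Finset.mem_coe.1 hi) _).symm)

end Ultraproduct

section Loeb

attribute [local instance] loebSpace

variable {X : ℕ → Type} [∀ i, Fintype (X i)] {ω : Ultrafilter ℕ}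

lemma measurableSet_internalSet (A : ∀ i, Finset (X i)) : MeasurableSet (internalSet X ω A) := by
  refine MeasurableSpace.measurableSet_generateFrom ⟨A, fun ε hε => ⟨fun _ => ∅, by simp, ?_⟩⟩
  simpa [intMeasure, ulim_eq_of_tendsto tendsto_const_nhds] using hε.le

lemma tendsto_intMeasure (A : ∀ i, Finset (X i)) :
    Tendsto (fun i => ((A i).card : ℝ) / Fintype.card (X i)) ω (𝓝 (intMeasure X ω A)) :=
  tendsto_ulim_of_mem_Icc fun i =>
    ⟨by positivity, div_le_one_of_le₀ (mod_cast (A i).card_le_univ) (Nat.cast_nonneg _)⟩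

lemma intMeasure_nonneg (A : ∀ i, Finset (X i)) : 0 ≤ intMeasure X ω A :=
  ge_of_tendsto' (tendsto_intMeasure A) fun _ => by positivity

variable {ν : Measure (UProd X ω)}

lemma IsLoebMeasure.measureReal_internalSet (hν : IsLoebMeasure X ω ν) (A : ∀ i, Finset (X i)) :
    ν.real (internalSet X ω A) = intMeasure X ω A := by
  rw [measureReal_def, hν.2, ENNReal.toReal_ofReal (intMeasure_nonneg A)]

lemma IsLoebMeasure.nonempty (hν : IsLoebMeasure X ω ν) (i : ℕ) : Nonempty (X i) := by
  have := hν.1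
  obtain ⟨x⟩ := nonempty_of_isProbabilityMeasure ν
  exact Quotient.inductionOn x fun p => ⟨p i⟩

lemma integrable_uprodFun [IsFiniteMeasure ν] {f : ∀ i, X i → ℝ} {m M : ℝ}
    (hf : ∀ i p, f i p ∈ Icc m M) (hmeas : Measurable (uprodFun X ω f)) :
    Integrable (uprodFun X ω f) ν :=
  Integrable.of_bound hmeas.aestronglyMeasurable (max |m| |M|) <| Eventually.of_forall fun x =>
    abs_le_max_abs_abs (uprodFun_mem_Icc hf x).1 (uprodFun_mem_Icc hf x).2

noncomputable def levelFamily (g : ∀ i, X i → ℝ) (v : ℝ) : ∀ i, Finset (X i) :=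
  fun i => Finset.univ.filter fun p => g i p = v

variable {g : ∀ i, X i → ℝ} {V : Finset ℝ}

lemma eq_sum_indicator_levelFamily (hg : ∀ i p, g i p ∈ V) (i : ℕ) (p : X i) :
    g i p = ∑ v ∈ V, v * (levelFamily g v i : Set (X i)).indicator 1 p := by
  classical
  simp [levelFamily, indicator_apply, hg]

lemma sum_eq_sum_mul_card_levelFamily (hg : ∀ i p, g i p ∈ V) (i : ℕ) :
    ∑ p, g i p = ∑ v ∈ V, v * (levelFamily g v i).card := by
  simp_rw [eq_sum_indicator_levelFamily hg i]
  rw [Finset.sum_comm]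
  refine Finset.sum_congr rfl fun v _ => ?_
  rw [← Finset.mul_sum, Finset.sum_indicator_subset _ (Finset.subset_univ _)]
  simp

lemma uprodFun_eq_sum_indicator (hg : ∀ i p, g i p ∈ V) :
    uprodFun X ω g =
      fun x => ∑ v ∈ V, v * (internalSet X ω (levelFamily g v)).indicator 1 x := by
  funext x
  induction x using Quotient.inductionOn with
  | h p =>
    exact ulim_eq_of_tendsto <| (tendsto_finsetSum V fun v _ =>
      (tendsto_indicator_internalSet _ p).const_mul v).congr fun i =>
        (eq_sum_indicator_levelFamily hg i (p i)).symm

lemma measurable_uprodFun_of_mem_finset (hg : ∀ i p, g i p ∈ V) :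
    Measurable (uprodFun X ω g) := by
  rw [uprodFun_eq_sum_indicator hg]
  exact Finset.measurable_sum _ fun v _ =>
    (measurable_one.indicator (measurableSet_internalSet _)).const_mul v

lemma integrable_uprodFun_of_mem_finset [IsFiniteMeasure ν] (hg : ∀ i p, g i p ∈ V) :
    Integrable (uprodFun X ω g) ν := by
  rw [uprodFun_eq_sum_indicator hg]
  exact integrable_finsetSum _ fun v _ =>
    ((integrable_const 1).indicator (measurableSet_internalSet _)).const_mul v

lemma tendsto_sum_div_card_of_mem_finset (hg : ∀ i p, g i p ∈ V) :
    Tendsto (fun i => (∑ p, g i p) / Fintype.card (X i)) ω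
      (𝓝 (∑ v ∈ V, v * intMeasure X ω (levelFamily g v))) := by
  refine (tendsto_finsetSum V fun v _ => (tendsto_intMeasure _).const_mul v).congr fun i => ?_
  rw [sum_eq_sum_mul_card_levelFamily hg, Finset.sum_div]
  simp_rw [mul_div_assoc]

lemma IsLoebMeasure.integral_uprodFun_of_mem_finset (hν : IsLoebMeasure X ω ν)
    (hg : ∀ i p, g i p ∈ V) :
    ∫ x, uprodFun X ω g x ∂ν = ulim ω fun i => (∑ p, g i p) / Fintype.card (X i) := by
  have := hν.1
  rw [ulim_eq_of_tendsto (tendsto_sum_div_card_of_mem_finset hg), uprodFun_eq_sum_indicator hg,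
    integral_finsetSum _ fun v _ =>
      ((integrable_const 1).indicator (measurableSet_internalSet _)).const_mul v]
  simp_rw [integral_const_mul, integral_indicator_one (measurableSet_internalSet _),
    hν.measureReal_internalSet]

lemma IsLoebMeasure.abs_integral_uprodFun_sub_ulim_le (hν : IsLoebMeasure X ω ν)
    {f : ∀ i, X i → ℝ} {m M ε : ℝ} (hf : ∀ i p, f i p ∈ Icc m M)
    (hmeas : Measurable (uprodFun X ω f)) (hg : ∀ i p, g i p ∈ V)
    (hfg : ∀ i p, |f i p - g i p| ≤ ε) :
    |∫ x, uprodFun X ω f x ∂ν - ulim ω fun i => (∑ p, f i p) / Fintype.card (X i)| ≤ 2 * ε := by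
  have := hν.1
  have := hν.nonempty
  calc _ ≤ |∫ x, uprodFun X ω f x ∂ν - ∫ x, uprodFun X ω g x ∂ν| +
          |(ulim ω fun i => (∑ p, f i p) / Fintype.card (X i)) -
            ulim ω fun i => (∑ p, g i p) / Fintype.card (X i)| := by
        rw [abs_sub_comm (ulim ω _), hν.integral_uprodFun_of_mem_finset hg]
        exact abs_sub_le _ _ _
    _ ≤ ε + ε := add_le_add
        (abs_integral_sub_integral_le (integrable_uprodFun hf hmeas)
          (integrable_uprodFun_of_mem_finset hg) (abs_uprodFun_sub_le hf hfg))
        (abs_ulim_sub_ulim_le (fun i => sum_div_card_mem_Icc (hf i))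
          fun i => abs_sum_div_card_sub_le (hfg i))
    _ = 2 * ε := (two_mul ε).symm

end Loeb

theorem uprodFun_measurable_and_integral_general (X : ℕ → Type) [∀ i, Fintype (X i)]
    (ω : Ultrafilter ℕ)
    (d : ℝ) (f : ∀ i, X i → ℝ) (hf : ∀ i p, f i p ∈ Set.Icc (-d) d)
    (ν : @MeasureTheory.Measure (UProd X ω) (loebSpace X ω))
    (hν : IsLoebMeasure X ω ν) :
    Measurable[loebSpace X ω] (uprodFun X ω f) ∧
    ∫ x, uprodFun X ω f x ∂ν =
      ulim ω (fun i => (∑ p : X i, f i p) / (Fintype.card (X i) : ℝ)) := by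
  let _ := loebSpace X ω
  have hfinite : ∀ ε > 0, ∃ V : Finset ℝ, ∀ i p, ⌊f i p / ε⌋ * ε ∈ V :=
    fun ε hε => ⟨_, fun i p => Int.floor_div_mul_mem_image hε (hf i p)⟩
  have hmeas : Measurable (uprodFun X ω f) :=
    measurable_of_forall_exists_abs_sub_le fun ε hε =>
      let ⟨_, hV⟩ := hfinite ε hε
      ⟨_, measurable_uprodFun_of_mem_finset hV,
        abs_uprodFun_sub_le hf fun _ _ => Int.abs_sub_floor_div_mul_le hε⟩
  refine ⟨hmeas, eq_of_forall_dist_le fun ε hε => ?_⟩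
  obtain ⟨V, hV⟩ := hfinite (ε / 2) (half_pos hε)
  exact (hν.abs_integral_uprodFun_sub_ulim_le hf hmeas hV
    fun _ _ => Int.abs_sub_floor_div_mul_le (half_pos hε)).trans_eq (mul_div_cancel₀ ε two_ne_zero)

/-- The ultraproduct of uniformly bounded functions `fᵢ : Xᵢ → [-d,d]` is measurable for
the Loeb σ-algebra and its integral against the Loeb measure is the ultralimit of the
averages: `∫ f dμ = lim_ω (Σ_{p ∈ Xᵢ} fᵢ(p))/|Xᵢ|`. -/
theorem uprodFun_measurable_and_integral (X : ℕ → Type) [∀ i, Fintype (X i)]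
    (ω : Ultrafilter ℕ) (hω : (ω : Filter ℕ) ≤ Filter.cofinite)
    (hcard : StrictMono fun i => Fintype.card (X i))
    (d : ℝ) (f : ∀ i, X i → ℝ) (hf : ∀ i p, f i p ∈ Set.Icc (-d) d)
    (ν : @MeasureTheory.Measure (UProd X ω) (loebSpace X ω))
    (hν : IsLoebMeasure X ω ν) :
    Measurable[loebSpace X ω] (uprodFun X ω f) ∧
    ∫ x, uprodFun X ω f x ∂ν =
      ulim ω (fun i => (∑ p : X i, f i p) / (Fintype.card (X i) : ℝ)) :=
  uprodFun_measurable_and_integral_general X ω d f hf ν hν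
end
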